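/- Let ψ₁ < ψ₂, μ > 0, h₀ ∈ C²([ψ₁,ψ₂]), and let q be of class C² on an open set containing K = {(φ,ψ) : h₀(ψ) − μ ≤ φ ≤ h₀(ψ) + μ, ψ₁ ≤ ψ ≤ ψ₂}, satisfying (⋆) there, with q(h₀(ψ),ψ) = c_* for all ψ ∈ [ψ₁,ψ₂] and q(φ,ψ) < c_* whenever h₀(ψ) − μ ≤ φ < h₀(ψ) (the flow is subsonic on the left of the sonic curve φ = h₀(ψ)). Then: (i) if ∂q/∂ψ(h₀(ψ₁),ψ₁) = 0 and h₀'(ψ₁) = 0, there exists ε ∈ (0, ψ₂ − ψ₁] such that h₀(ψ) ≤ h₀(ψ₁) for all ψ ∈ [ψ₁, ψ₁+ε]; (ii) if ∂q/∂ψ(h₀(ψ₂),ψ₂) = 0 and h₀'(ψ₂) = 0, there exists ε ∈ (0, ψ₂ − ψ₁] such that h₀(ψ) ≤ h₀(ψ₂) for all ψ ∈ [ψ₂−ε, ψ₂]. -/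

import Mathlib

open Real Set MeasureTheory Filter

noncomputable section

/-- The density function `ρ(t) = (1 − ((γ−1)/2) t)^{1/(γ−1)}`. -/
def rhoF (γ t : ℝ) : ℝ := (1 - (γ - 1) / 2 * t) ^ ((1 : ℝ) / (γ - 1))

/-- The critical (sonic) speed `c_* = (2/(γ+1))^{1/2}`. -/
def cstar (γ : ℝ) : ℝ := Real.sqrt (2 / (γ + 1))

/-- The maximal speed `q_max = (2/(γ−1))^{1/2}`. -/
def qmaxF (γ : ℝ) : ℝ := Real.sqrt (2 / (γ - 1))

/-- `A(q) = ∫_{c_*}^q (ρ(s²)+2s²ρ'(s²))/(s ρ(s²)²) ds`. -/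
def Afun (γ q : ℝ) : ℝ :=
  ∫ s in (cstar γ)..q,
    (rhoF γ (s ^ 2) + 2 * s ^ 2 * deriv (rhoF γ) (s ^ 2)) / (s * (rhoF γ (s ^ 2)) ^ 2)

/-- `B(q) = ∫_{c_*}^q ρ(s²)/s ds`. -/
def Bfun (γ q : ℝ) : ℝ := ∫ s in (cstar γ)..q, rhoF γ (s ^ 2) / s

/-- Inverse of `A` restricted to `[c_*, q_max)`. -/
def AplusInv (γ : ℝ) : ℝ → ℝ := Function.invFunOn (Afun γ) (Ico (cstar γ) (qmaxF γ))

/-- `K(s) = B(A₊⁻¹(s))`. -/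
def Kfun (γ s : ℝ) : ℝ := Bfun γ (AplusInv γ s)

/-- `b(s) = −K'(s)`. -/
def bfun (γ s : ℝ) : ℝ := -deriv (Kfun γ) s

/-- `p(s) = −K''(s)`. -/
def pfun (γ s : ℝ) : ℝ := -deriv (deriv (Kfun γ)) s

/-- Partial derivative in the first (potential) variable. -/
def pdx (u : ℝ × ℝ → ℝ) (p : ℝ × ℝ) : ℝ := deriv (fun x => u (x, p.2)) p.1

/-- Partial derivative in the second (stream) variable. -/
def pdy (u : ℝ × ℝ → ℝ) (p : ℝ × ℝ) : ℝ := deriv (fun y => u (p.1, y)) p.2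

/-- The Chaplygin equation (⋆) at a point. -/
def chap (γ : ℝ) (q : ℝ × ℝ → ℝ) (p : ℝ × ℝ) : Prop :=
  pdx (pdx fun z => Afun γ (q z)) p + pdy (pdy fun z => Bfun γ (q z)) p = 0

/-!
Near the sonic speed `c = c_*` one has `A'(c) = 0 > A''(c)`, `B(c) = 0` and `B'(c) > 0`. Hence
on a neighbourhood `U` of `c` (a "sonic window"): `A'' ≤ 0`, `B < 0` below `c`, and
`|A'(s)| ≤ K (-B(s))` for `s ≤ c`.

Suppose `h₀` rises above `h₀ ψ₁` at some `β` close to `ψ₁`. Let `τ` minimise `h₀` on `[ψ₁, β]`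
and `X = h₀ τ < h₀ β`. The vertical segment `{X} × [τ, β]` lies in the closed subsonic region, and
`(X, τ)` is an exceptional sonic point: either `τ = ψ₁`, or `τ` is an interior minimum of `h₀` and
differentiating `q (h₀ ψ, ψ) = c` gives `∂q/∂ψ = 0`. Then `f ψ = -B (q (X, ψ)) ≥ 0` satisfies
`f τ = f' τ = 0` and, by the equation,
`f'' = (A ∘ q)_φφ = A''(q) q_φ² + A'(q) q_φφ ≤ K ‖q_φφ‖∞ f`.
On a short interval this forces `f ≡ 0`, i.e. `q (X, β) = c`, contradicting subsonicity at
`(X, β)`. The endpoint `ψ₂` follows by the reflection `ψ ↦ ψ₁ + ψ₂ - ψ`, which preserves the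
equation.
-/

open Topology Metric

lemma sub_le_mul_sub_of_hasDerivAt_le {f f' : ℝ → ℝ} {a b L t : ℝ}
    (hf : ∀ s ∈ Icc a b, HasDerivAt f (f' s) s) (hf' : ∀ s ∈ Icc a b, f' s ≤ L)
    (ht : t ∈ Icc a b) : f t - f a ≤ L * (t - a) :=
  (convex_Icc a b).image_sub_le_mul_sub_of_deriv_le
    (fun s hs => (hf s hs).continuousAt.continuousWithinAt)
    (fun s hs => (hf s (interior_subset hs)).differentiableAt.differentiableWithinAt)
    (fun s hs => (hf s (interior_subset hs)).deriv ▸ hf' s (interior_subset hs))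
    a ⟨le_rfl, ht.1.trans ht.2⟩ t ht ht.1

/-- Two integrations of `φ'' ≤ C φ ≤ C max φ` give `max φ ≤ C (b - a)² max φ`. -/
lemma eqOn_zero_of_deriv2_le_mul {φ φ' φ'' : ℝ → ℝ} {a b C : ℝ} (hab : a ≤ b) (hC : 0 ≤ C)
    (hsmall : C * (b - a) ^ 2 < 1) (hφ : ∀ t ∈ Icc a b, HasDerivAt φ (φ' t) t)
    (hφ' : ∀ t ∈ Icc a b, HasDerivAt φ' (φ'' t) t) (ha : φ a = 0) (ha' : φ' a = 0)
    (hnonneg : ∀ t ∈ Icc a b, 0 ≤ φ t) (hφ'' : ∀ t ∈ Icc a b, φ'' t ≤ C * φ t) :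
    EqOn φ 0 (Icc a b) := by
  obtain ⟨m, hm, hmax⟩ := isCompact_Icc.exists_isMaxOn (nonempty_Icc.2 hab)
    fun t ht => (hφ t ht).continuousAt.continuousWithinAt
  have hm0 := hnonneg m hm
  have hφ'_le : ∀ t ∈ Icc a b, φ' t ≤ C * φ m * (b - a) := fun t ht => by
    have := sub_le_mul_sub_of_hasDerivAt_le hφ'
      (fun s hs => (hφ'' s hs).trans (mul_le_mul_of_nonneg_left (hmax hs) hC)) ht
    nlinarith [ht.1, ht.2, mul_nonneg hC hm0]
  have hφm_le : φ m ≤ C * (b - a) ^ 2 * φ m :=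
    calc φ m ≤ C * φ m * (b - a) * (m - a) := by
          linarith [sub_le_mul_sub_of_hasDerivAt_le hφ hφ'_le hm]
      _ ≤ C * φ m * (b - a) * (b - a) := by
          have := mul_nonneg (mul_nonneg hC hm0) (sub_nonneg.2 hab)
          gcongr
          exact hm.2
      _ = C * (b - a) ^ 2 * φ m := by ring
  have hφm : φ m = 0 := by nlinarith
  exact fun t ht => le_antisymm ((hmax ht).trans hφm.le) (hnonneg t ht)

lemma deriv_deriv_comp {A f : ℝ → ℝ} {x : ℝ} (hA : ContDiffAt ℝ 2 A (f x))
    (hf : ContDiffAt ℝ 2 f x) :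
    deriv (deriv (A ∘ f)) x =
      deriv (deriv A) (f x) * deriv f x ^ 2 + deriv A (f x) * deriv (deriv f) x := by
  have hev : deriv (A ∘ f) =ᶠ[𝓝 x] fun y => deriv A (f y) * deriv f y := by
    filter_upwards [hf.eventually (by simp), hf.continuousAt.eventually (hA.eventually (by simp))]
      with y hfy hAy
    exact deriv_comp y (hAy.differentiableAt (by simp)) (hfy.differentiableAt (by simp))
  have hA' := (hA.derivWithin (m := 1) (by norm_num)).differentiableAt_one.hasDerivAt
  have hf' := (hf.derivWithin (m := 1) (by norm_num)).differentiableAt_one.hasDerivAt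
  rw [hev.deriv_eq]
  exact ((hA'.comp x (hf.differentiableAt (by simp)).hasDerivAt).fun_mul hf').deriv.trans
    (by rw [Function.comp_apply]; ring)

section Primitive

variable {f : ℝ → ℝ} {I : Set ℝ} {c : ℝ}

lemma hasDerivAt_integral_of_continuousOn (hI : IsOpen I) (hI' : I.OrdConnected)
    (hc : c ∈ I) (hf : ContinuousOn f I) {x : ℝ} (hx : x ∈ I) :
    HasDerivAt (fun x => ∫ t in c..x, f t) (f x) x :=
  intervalIntegral.integral_hasDerivAt_right
    ((hf.mono (hI'.uIcc_subset hc hx)).intervalIntegrable)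
    (hf.stronglyMeasurableAtFilter hI x hx) (hf.continuousAt (hI.mem_nhds hx))

lemma contDiffOn_integral {n : ℕ} (hI : IsOpen I) (hI' : I.OrdConnected) (hc : c ∈ I)
    (hf : ContDiffOn ℝ n f I) : ContDiffOn ℝ (n + 1) (fun x => ∫ t in c..x, f t) I := by
  have hderiv : ∀ x ∈ I, HasDerivAt (fun x => ∫ t in c..x, f t) (f x) x := fun x hx =>
    hasDerivAt_integral_of_continuousOn hI hI' hc hf.continuousOn hx
  refine (contDiffOn_succ_iff_deriv_of_isOpen hI).2
    ⟨fun x hx => (hderiv x hx).differentiableAt.differentiableWithinAt, by simp, ?_⟩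
  exact hf.congr fun x hx => (hderiv x hx).deriv

end Primitive

section PartialDerivatives

variable {u : ℝ × ℝ → ℝ} {V : Set (ℝ × ℝ)} {x y : ℝ}

lemma ContDiffOn.contDiffAt_comp_prodMk_left {n : WithTop ℕ∞} (hV : IsOpen V)
    (hu : ContDiffOn ℝ n u V) (hz : (x, y) ∈ V) : ContDiffAt ℝ n (fun x' => u (x', y)) x :=
  (hu.contDiffAt (hV.mem_nhds hz)).comp x (contDiff_prodMk_left y).contDiffAt

lemma ContDiffOn.contDiffAt_comp_prodMk_right {n : WithTop ℕ∞} (hV : IsOpen V)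
    (hu : ContDiffOn ℝ n u V) (hz : (x, y) ∈ V) : ContDiffAt ℝ n (fun y' => u (x, y')) y :=
  (hu.contDiffAt (hV.mem_nhds hz)).comp y (contDiff_prodMk_right x).contDiffAt

lemma pdx_eq_fderiv {z : ℝ × ℝ} (hu : DifferentiableAt ℝ u z) : pdx u z = fderiv ℝ u z (1, 0) :=
  (hu.hasFDerivAt.comp_hasDerivAt z.1 ((hasDerivAt_id z.1).prodMk (hasDerivAt_const z.1 z.2))).deriv

lemma pdy_eq_fderiv {z : ℝ × ℝ} (hu : DifferentiableAt ℝ u z) : pdy u z = fderiv ℝ u z (0, 1) :=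
  (hu.hasFDerivAt.comp_hasDerivAt z.2 ((hasDerivAt_const z.2 z.1).prodMk (hasDerivAt_id z.2))).deriv

lemma ContDiffOn.pdx {m n : WithTop ℕ∞} (hV : IsOpen V) (hu : ContDiffOn ℝ n u V)
    (hmn : m + 1 ≤ n) : ContDiffOn ℝ m (pdx u) V :=
  ((hu.fderiv_of_isOpen hV hmn).clm_apply contDiffOn_const).congr fun _ hz =>
    pdx_eq_fderiv ((hu.differentiableOn (by rintro rfl; simp at hmn)).differentiableAt
      (hV.mem_nhds hz))

lemma hasDerivAt_comp_graph {h : ℝ → ℝ} {h' t : ℝ} (hu : DifferentiableAt ℝ u (h t, t))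
    (hh : HasDerivAt h h' t) :
    HasDerivAt (fun s => u (h s, s)) (h' * pdx u (h t, t) + pdy u (h t, t)) t := by
  have hsplit : ((h', 1) : ℝ × ℝ) = h' • ((1 : ℝ), (0 : ℝ)) + ((0 : ℝ), (1 : ℝ)) := by simp
  have := HasFDerivAt.comp_hasDerivAt (f := fun s => (h s, s)) t hu.hasFDerivAt
    (hh.prodMk (hasDerivAt_id' t))
  rwa [hsplit, map_add, map_smul, ← pdx_eq_fderiv hu, ← pdy_eq_fderiv hu, smul_eq_mul] at this

lemma pdy_eq_zero_of_const_on_graph {h : ℝ → ℝ} {t c : ℝ} (hu : DifferentiableAt ℝ u (h t, t))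
    (hh : HasDerivAt h 0 t) (hconst : ∀ᶠ s in 𝓝 t, u (h s, s) = c) : pdy u (h t, t) = 0 := by
  simpa using (hasDerivAt_comp_graph hu hh).unique
    ((hasDerivAt_const t c).congr_of_eventuallyEq hconst)

lemma pdy_comp_reflect (u : ℝ × ℝ → ℝ) (a x y : ℝ) :
    pdy (fun z => u (z.1, a - z.2)) (x, y) = -pdy u (x, a - y) :=
  deriv_comp_const_sub (fun t => u (x, t)) a y

lemma pdy_pdy_comp_reflect (u : ℝ × ℝ → ℝ) (a x y : ℝ) :
    pdy (pdy fun z => u (z.1, a - z.2)) (x, y) = pdy (pdy u) (x, a - y) := by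
  have : pdy (fun z => u (z.1, a - z.2)) = fun z => -pdy u (z.1, a - z.2) :=
    funext fun z => pdy_comp_reflect u a z.1 z.2
  rw [this, pdy, deriv.fun_neg]
  exact (congrArg Neg.neg (pdy_comp_reflect (pdy u) a x y)).trans (neg_neg _)

lemma exists_closedBall_abs_pdx_pdx_le {W : Set (ℝ × ℝ)} (hW : IsOpen W)
    (hu : ContDiffOn ℝ 2 u W) {z : ℝ × ℝ} (hz : z ∈ W) :
    ∃ r > 0, ∃ D, closedBall z r ⊆ W ∧ ∀ w ∈ closedBall z r, |pdx (pdx u) w| ≤ D := by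
  obtain ⟨r, hr, hrW⟩ := nhds_basis_closedBall.mem_iff.1 (hW.mem_nhds hz)
  obtain ⟨D, hD⟩ := (isCompact_closedBall z r).exists_bound_of_continuousOn
    (((hu.pdx hW (m := 1) le_rfl).pdx hW (m := 0) le_rfl).continuousOn.mono hrW)
  exact ⟨r, hr, D, hrW, hD⟩

lemma pdy_eq_zero_of_isMinOn {q : ℝ × ℝ → ℝ} {h₀ : ℝ → ℝ} {ψ₁ β τ c : ℝ}
    (hq : DifferentiableAt ℝ q (h₀ τ, τ)) (hh₀ : DifferentiableAt ℝ h₀ τ)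
    (hmin : IsMinOn h₀ (Icc ψ₁ β) τ) (hτ : τ ∈ Ico ψ₁ β) (hson : ∀ s ∈ Icc ψ₁ β, q (h₀ s, s) = c)
    (hexc : pdy q (h₀ ψ₁, ψ₁) = 0) : pdy q (h₀ τ, τ) = 0 := by
  rcases hτ.1.eq_or_lt with h | h
  · rwa [← h]
  refine pdy_eq_zero_of_const_on_graph (c := c) hq
    ((hmin.isLocalMin (Icc_mem_nhds h hτ.2)).deriv_eq_zero ▸ hh₀.hasDerivAt) ?_
  filter_upwards [Ioo_mem_nhds h hτ.2] with s hs using hson s (Ioo_subset_Icc_self hs)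

end PartialDerivatives

structure IsSonicWindow (A B : ℝ → ℝ) (c K : ℝ) (U : Set ℝ) : Prop where
  isOpen : IsOpen U
  mem : c ∈ U
  contDiffOn_A : ContDiffOn ℝ 2 A U
  contDiffOn_B : ContDiffOn ℝ 2 B U
  deriv_deriv_A_nonpos : ∀ s ∈ U, deriv (deriv A) s ≤ 0
  B_eq_zero : B c = 0
  B_neg : ∀ s ∈ U, s < c → B s < 0
  K_nonneg : 0 ≤ K
  abs_deriv_A_le : ∀ s ∈ U, s ≤ c → |deriv A s| ≤ K * -B s

lemma exists_isSonicWindow {A B : ℝ → ℝ} {c : ℝ} {U : Set ℝ} (hU : IsOpen U) (hc : c ∈ U)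
    (hA : ContDiffOn ℝ 2 A U) (hB : ContDiffOn ℝ 2 B U) (hA1 : deriv A c = 0)
    (hA2 : deriv (deriv A) c < 0) (hB0 : B c = 0) (hB1 : 0 < deriv B c) :
    ∃ K V, IsSonicWindow A B c K V := by
  have hA' : ContDiffOn ℝ 1 (deriv A) U := hA.deriv_of_isOpen hU (by norm_num)
  have hev : ∀ᶠ s in 𝓝 c, s ∈ U ∧ deriv (deriv A) s ∈ Ioo (2 * deriv (deriv A) c) 0 ∧
      deriv B c / 2 < deriv B s :=
    Filter.Eventually.and (hU.mem_nhds hc) <|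
      (((hA'.continuousOn_deriv_of_isOpen hU le_rfl).continuousAt (hU.mem_nhds hc)).eventually
        (Ioo_mem_nhds (by linarith) hA2)).and
      (((hB.continuousOn_deriv_of_isOpen hU (by norm_num)).continuousAt (hU.mem_nhds hc)).eventually
        (lt_mem_nhds (by linarith)))
  obtain ⟨δ, hδ, hball⟩ := eventually_nhds_iff_ball.1 hev
  have hsub : ball c δ ⊆ U := fun s hs => (hball s hs).1
  have hcδ : c ∈ ball c δ := mem_ball_self hδ
  have hgrowth : ∀ {g : ℝ → ℝ} {L : ℝ}, ContDiffOn ℝ 1 g U → (∀ x ∈ ball c δ, L ≤ deriv g x) →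
      ∀ s ∈ ball c δ, s ≤ c → L * (c - s) ≤ g c - g s := fun hg hL s hs hsc =>
    (convex_ball c δ).mul_sub_le_image_sub_of_le_deriv (hg.continuousOn.mono hsub)
      ((hg.differentiableOn one_ne_zero).mono (interior_subset.trans hsub))
      (fun x hx => hL x (interior_subset hx)) s hs c hcδ hsc
  have hB_growth := hgrowth (hB.of_le (by norm_num)) fun x hx => (hball x hx).2.2.le
  have hA_growth := hgrowth hA' fun x hx => (hball x hx).2.1.1.le
  have hA_anti : AntitoneOn (deriv A) (ball c δ) := antitoneOn_of_deriv_nonpos (convex_ball c δ)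
    (hA'.continuousOn.mono hsub) ((hA'.differentiableOn one_ne_zero).mono
      (interior_subset.trans hsub)) fun x hx => (hball x (interior_subset hx)).2.1.2.le
  refine ⟨-2 * deriv (deriv A) c / (deriv B c / 2), ball c δ, isOpen_ball, hcδ, hA.mono hsub,
    hB.mono hsub, fun s hs => (hball s hs).2.1.2.le, hB0, fun s hs hsc => ?_,
    div_nonneg (by linarith) (by linarith), fun s hs hsc => ?_⟩
  · nlinarith [hB_growth s hs hsc.le]
  · have h1 : deriv A c ≤ deriv A s := hA_anti hs hcδ hsc
    have h2 := hA_growth s hs hsc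
    have h3 := hB_growth s hs hsc
    rw [abs_of_nonneg (by linarith), div_mul_eq_mul_div, le_div_iff₀ (by linarith)]
    nlinarith

def sonicStrip (h₀ : ℝ → ℝ) (μ ψ₁ ψ₂ : ℝ) : Set (ℝ × ℝ) :=
  {p | h₀ p.2 - μ ≤ p.1 ∧ p.1 ≤ h₀ p.2 + μ ∧ ψ₁ ≤ p.2 ∧ p.2 ≤ ψ₂}

namespace IsSonicWindow

variable {A B : ℝ → ℝ} {c K : ℝ} {U : Set ℝ} {q : ℝ × ℝ → ℝ} {V : Set (ℝ × ℝ)}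

lemma B_nonpos (hW : IsSonicWindow A B c K U) {s : ℝ} (hs : s ∈ U) (hsc : s ≤ c) : B s ≤ 0 :=
  hsc.lt_or_eq.elim (fun h => (hW.B_neg s hs h).le) fun h => (h ▸ hW.B_eq_zero).le

lemma neg_pdy_pdy_le (hW : IsSonicWindow A B c K U) (hV : IsOpen V) (hq : ContDiffOn ℝ 2 q V)
    {z : ℝ × ℝ} (hz : z ∈ V) (hqz : q z ∈ U) (hqc : q z ≤ c) {D : ℝ}
    (hD : |pdx (pdx q) z| ≤ D)
    (hPDE : pdx (pdx fun z => A (q z)) z + pdy (pdy fun z => B (q z)) z = 0) :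
    -pdy (pdy fun z => B (q z)) z ≤ K * D * -B (q z) := by
  obtain ⟨x, y⟩ := z
  have hexpand : pdx (pdx fun z => A (q z)) (x, y) = deriv (deriv A) (q (x, y)) *
      pdx q (x, y) ^ 2 + deriv A (q (x, y)) * pdx (pdx q) (x, y) :=
    deriv_deriv_comp (hW.contDiffOn_A.contDiffAt (hW.isOpen.mem_nhds hqz))
      (hq.contDiffAt_comp_prodMk_left hV hz)
  have hconvex : deriv (deriv A) (q (x, y)) * pdx q (x, y) ^ 2 ≤ 0 :=
    mul_nonpos_of_nonpos_of_nonneg (hW.deriv_deriv_A_nonpos _ hqz) (sq_nonneg _)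
  have hsmall : deriv A (q (x, y)) * pdx (pdx q) (x, y) ≤ K * -B (q (x, y)) * D :=
    calc _ ≤ |deriv A (q (x, y))| * |pdx (pdx q) (x, y)| := (le_abs_self _).trans (abs_mul _ _).le
      _ ≤ K * -B (q (x, y)) * D := mul_le_mul (hW.abs_deriv_A_le _ hqz hqc) hD (abs_nonneg _)
          (mul_nonneg hW.K_nonneg (neg_nonneg.2 (hW.B_nonpos hqz hqc)))
  linarith

lemma eq_of_exceptional_on_segment (hW : IsSonicWindow A B c K U) (hV : IsOpen V)
    (hq : ContDiffOn ℝ 2 q V) (hqU : MapsTo q V U) {X a b D : ℝ} (hab : a ≤ b)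
    (hsmall : K * D * (b - a) ^ 2 < 1)
    (hseg : ∀ y ∈ Icc a b, (X, y) ∈ V ∧ q (X, y) ≤ c ∧ |pdx (pdx q) (X, y)| ≤ D ∧
      pdx (pdx fun z => A (q z)) (X, y) + pdy (pdy fun z => B (q z)) (X, y) = 0)
    (hsonic : q (X, a) = c) (hexc : pdy q (X, a) = 0) : q (X, b) = c := by
  have ha := left_mem_Icc.2 hab
  have hcol : ∀ y ∈ Icc a b, ContDiffAt ℝ 2 (fun y' => B (q (X, y'))) y := fun y hy =>
    (hW.contDiffOn_B.comp hq hqU).contDiffAt_comp_prodMk_right hV (hseg y hy).1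
  have hφ' : ∀ y ∈ Icc a b, HasDerivAt (fun y => -B (q (X, y)))
      (-pdy (fun z => B (q z)) (X, y)) y := fun y hy =>
    ((hcol y hy).differentiableAt (by simp)).hasDerivAt.neg
  have hφ'' : ∀ y ∈ Icc a b, HasDerivAt (fun y => -pdy (fun z => B (q z)) (X, y))
      (-pdy (pdy fun z => B (q z)) (X, y)) y := fun y hy =>
    ((hcol y hy).derivWithin (m := 1) (by norm_num)).differentiableAt_one.hasDerivAt.neg
  have hφ'a : pdy (fun z => B (q z)) (X, a) = 0 := by
    have hB := (hW.contDiffOn_B.differentiableOn (by simp)).differentiableAt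
      (hW.isOpen.mem_nhds (hqU (hseg a ha).1))
    have hqa := (hq.contDiffAt_comp_prodMk_right hV (hseg a ha).1).differentiableAt (by simp)
    have hexc' : deriv (fun y => q (X, y)) a = 0 := hexc
    exact (deriv_comp a hB hqa).trans (by rw [hexc', mul_zero])
  have hzero := eqOn_zero_of_deriv2_le_mul hab
    (mul_nonneg hW.K_nonneg ((abs_nonneg _).trans (hseg a ha).2.2.1)) hsmall hφ' hφ''
    (by simp [hsonic, hW.B_eq_zero]) (by simp [hφ'a])
    (fun y hy => neg_nonneg.2 (hW.B_nonpos (hqU (hseg y hy).1) (hseg y hy).2.1))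
    (fun y hy => hW.neg_pdy_pdy_le hV hq (hseg y hy).1 (hqU (hseg y hy).1) (hseg y hy).2.1
      (hseg y hy).2.2.1 (hseg y hy).2.2.2) (right_mem_Icc.2 hab)
  by_contra hne
  have hb := hseg b (right_mem_Icc.2 hab)
  exact (hW.B_neg _ (hqU hb.1) (hb.2.1.lt_of_ne hne)).ne (by simpa using hzero)

lemma sonic_curve_le_of_near {ψ₁ ψ₂ μ : ℝ} {h₀ : ℝ → ℝ} (hh₀ : Differentiable ℝ h₀)
    (hW : IsSonicWindow A B c K U) (hV : IsOpen V) (hq : ContDiffOn ℝ 2 q V)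
    (hPDE : ∀ p ∈ sonicStrip h₀ μ ψ₁ ψ₂,
      pdx (pdx fun z => A (q z)) p + pdy (pdy fun z => B (q z)) p = 0)
    (hson : ∀ ψ ∈ Icc ψ₁ ψ₂, q (h₀ ψ, ψ) = c)
    (hsubl : ∀ ψ ∈ Icc ψ₁ ψ₂, ∀ φ, h₀ ψ - μ ≤ φ → φ < h₀ ψ → q (φ, ψ) < c)
    (hexc : pdy q (h₀ ψ₁, ψ₁) = 0) {r D β : ℝ}
    (hrW : closedBall (h₀ ψ₁, ψ₁) r ⊆ V ∩ q ⁻¹' U)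
    (hD : ∀ w ∈ closedBall (h₀ ψ₁, ψ₁) r, |pdx (pdx q) w| ≤ D)
    (hβ : β ∈ Icc ψ₁ ψ₂) (hβr : β - ψ₁ ≤ r) (hKD : K * D * (β - ψ₁) ^ 2 < 1)
    (hnear : ∀ y ∈ Icc ψ₁ β, |h₀ y - h₀ ψ₁| < min (μ / 2) r) : h₀ β ≤ h₀ ψ₁ := by
  by_contra! hβlt
  obtain ⟨τ, hτ, hτmin⟩ := isCompact_Icc.exists_isMinOn (nonempty_Icc.2 hβ.1)
    hh₀.continuous.continuousOn
  have hτψ₁ : h₀ τ ≤ h₀ ψ₁ := hτmin (left_mem_Icc.2 hβ.1)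
  have hτβ : τ < β := hτ.2.lt_of_ne (by rintro rfl; linarith)
  have hcol : ∀ y ∈ Icc τ β, (h₀ τ, y) ∈ closedBall (h₀ ψ₁, ψ₁) r ∧
      (h₀ τ, y) ∈ sonicStrip h₀ μ ψ₁ ψ₂ ∧ h₀ τ ≤ h₀ y ∧ y ∈ Icc ψ₁ ψ₂ := fun y hy => by
    have hy' : y ∈ Icc ψ₁ β := ⟨hτ.1.trans hy.1, hy.2⟩
    have hyμ := abs_lt.1 ((hnear y hy').trans_le (min_le_left _ _))
    have hτμ := abs_lt.1 ((hnear τ hτ).trans_le (min_le_left _ _))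
    have hτr := (hnear τ hτ).trans_le (min_le_right _ _)
    have hmin : h₀ τ ≤ h₀ y := hτmin hy'
    refine ⟨?_, ⟨by linarith, by linarith, hy'.1, by linarith [hy.2, hβ.2]⟩, hmin, hy'.1,
      by linarith [hy.2, hβ.2]⟩
    rw [mem_closedBall, Prod.dist_eq, Real.dist_eq, Real.dist_eq, max_le_iff]
    exact ⟨hτr.le, abs_le.2 ⟨by dsimp only; linarith [hy'.1, hβ.1],
      by dsimp only; linarith [hy'.2]⟩⟩
  have hexcτ : pdy q (h₀ τ, τ) = 0 :=
    pdy_eq_zero_of_isMinOn ((hq.differentiableOn (by simp)).differentiableAt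
      (hV.mem_nhds (hrW (hcol τ ⟨le_rfl, hτβ.le⟩).1).1)) (hh₀ τ) hτmin ⟨hτ.1, hτβ⟩
      (fun s hs => hson s ⟨hs.1, hs.2.trans hβ.2⟩) hexc
  have hqβ := hW.eq_of_exceptional_on_segment (hq.continuousOn.isOpen_inter_preimage hV hW.isOpen)
    (hq.mono inter_subset_left) (fun z hz => hz.2) hτβ.le ?_
    (fun y hy => ⟨hrW (hcol y hy).1, ?_, hD _ (hcol y hy).1, hPDE _ (hcol y hy).2.1⟩)
    (hson τ (hcol τ ⟨le_rfl, hτβ.le⟩).2.2.2) hexcτ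
  · exact (hsubl β hβ (h₀ τ) (hcol β ⟨hτβ.le, le_rfl⟩).2.1.1
      (hτψ₁.trans_lt hβlt)).ne hqβ
  · have := mul_nonneg hW.K_nonneg ((abs_nonneg _).trans (hD _ (hcol τ ⟨le_rfl, hτβ.le⟩).1))
    calc K * D * (β - τ) ^ 2 ≤ K * D * (β - ψ₁) ^ 2 := by gcongr; linarith [hτ.1]
      _ < 1 := hKD
  · obtain ⟨-, hstrip, hmin, hy⟩ := hcol y hy
    rcases hmin.eq_or_lt with h | h
    · exact (h ▸ hson y hy).le
    · exact (hsubl y hy _ hstrip.1 h).le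

theorem sonic_curve_le_start (hW : IsSonicWindow A B c K U) {ψ₁ ψ₂ μ : ℝ} (hψ : ψ₁ < ψ₂)
    (hμ : 0 < μ) {h₀ : ℝ → ℝ} (hh₀ : Differentiable ℝ h₀) (hV : IsOpen V)
    (hPV : (h₀ ψ₁, ψ₁) ∈ V) (hq : ContDiffOn ℝ 2 q V)
    (hPDE : ∀ p ∈ sonicStrip h₀ μ ψ₁ ψ₂,
      pdx (pdx fun z => A (q z)) p + pdy (pdy fun z => B (q z)) p = 0)
    (hson : ∀ ψ ∈ Icc ψ₁ ψ₂, q (h₀ ψ, ψ) = c)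
    (hsubl : ∀ ψ ∈ Icc ψ₁ ψ₂, ∀ φ, h₀ ψ - μ ≤ φ → φ < h₀ ψ → q (φ, ψ) < c)
    (hexc : pdy q (h₀ ψ₁, ψ₁) = 0) :
    ∃ ε > 0, ε ≤ ψ₂ - ψ₁ ∧ ∀ ψ ∈ Icc ψ₁ (ψ₁ + ε), h₀ ψ ≤ h₀ ψ₁ := by
  obtain ⟨r, hr, D, hrW, hD⟩ := exists_closedBall_abs_pdx_pdx_le
    (hq.continuousOn.isOpen_inter_preimage hV hW.isOpen) (hq.mono inter_subset_left)
    ⟨hPV, by simpa [hson ψ₁ ⟨le_rfl, hψ.le⟩] using hW.mem⟩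
  obtain ⟨ρ, hρ, hh₀ρ⟩ := Metric.continuousAt_iff.1 (hh₀.continuous.continuousAt (x := ψ₁))
    (min (μ / 2) r) (by positivity)
  have hsmall : ∀ᶠ ε in 𝓝 (0 : ℝ), ε ≤ ψ₂ - ψ₁ ∧ ε < ρ ∧ ε ≤ r ∧ K * D * ε ^ 2 < 1 :=
    (eventually_le_nhds (sub_pos.2 hψ)).and <| (eventually_lt_nhds hρ).and <|
      (eventually_le_nhds hr).and <|
      ((continuous_const.mul (continuous_pow 2)).tendsto' (0 : ℝ) 0 (by simp)).eventually
        (eventually_lt_nhds one_pos)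
  obtain ⟨ε, ⟨hεψ, hερ, hεr, hεD⟩, hε⟩ := ((hsmall.filter_mono nhdsWithin_le_nhds).and
    (self_mem_nhdsWithin : ∀ᶠ ε in 𝓝[>] (0 : ℝ), ε ∈ Ioi 0)).exists
  refine ⟨ε, hε, hεψ, fun β hβ => ?_⟩
  have hβε : β - ψ₁ ≤ ε := by linarith [hβ.2]
  refine sonic_curve_le_of_near hh₀ hW hV hq hPDE hson hsubl hexc hrW hD
    ⟨hβ.1, by linarith⟩ (by linarith) ?_ fun y hy => hh₀ρ ?_
  · have := mul_nonneg hW.K_nonneg ((abs_nonneg _).trans (hD _ (mem_closedBall_self hr.le)))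
    calc K * D * (β - ψ₁) ^ 2 ≤ K * D * ε ^ 2 := by gcongr; linarith [hβ.1]
      _ < 1 := hεD
  · rw [Real.dist_eq, abs_lt]
    constructor <;> linarith [hy.1, hy.2]

theorem sonic_curve_le_end (hW : IsSonicWindow A B c K U) {ψ₁ ψ₂ μ : ℝ} (hψ : ψ₁ < ψ₂)
    (hμ : 0 < μ) {h₀ : ℝ → ℝ} (hh₀ : Differentiable ℝ h₀) (hV : IsOpen V)
    (hPV : (h₀ ψ₂, ψ₂) ∈ V) (hq : ContDiffOn ℝ 2 q V)
    (hPDE : ∀ p ∈ sonicStrip h₀ μ ψ₁ ψ₂,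
      pdx (pdx fun z => A (q z)) p + pdy (pdy fun z => B (q z)) p = 0)
    (hson : ∀ ψ ∈ Icc ψ₁ ψ₂, q (h₀ ψ, ψ) = c)
    (hsubl : ∀ ψ ∈ Icc ψ₁ ψ₂, ∀ φ, h₀ ψ - μ ≤ φ → φ < h₀ ψ → q (φ, ψ) < c)
    (hexc : pdy q (h₀ ψ₂, ψ₂) = 0) :
    ∃ ε > 0, ε ≤ ψ₂ - ψ₁ ∧ ∀ ψ ∈ Icc (ψ₂ - ε) ψ₂, h₀ ψ ≤ h₀ ψ₂ := by
  set a := ψ₁ + ψ₂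
  have hrefl : ∀ ψ ∈ Icc ψ₁ ψ₂, a - ψ ∈ Icc ψ₁ ψ₂ := fun ψ hψ =>
    ⟨by linarith [hψ.2], by linarith [hψ.1]⟩
  have ha₁ : a - ψ₁ = ψ₂ := by ring
  have hPDE' : ∀ p ∈ sonicStrip (fun ψ => h₀ (a - ψ)) μ ψ₁ ψ₂,
      pdx (pdx fun z => A (q (z.1, a - z.2))) p +
        pdy (pdy fun z => B (q (z.1, a - z.2))) p = 0 := by
    rintro ⟨x, y⟩ ⟨h₁, h₂, h₃, h₄⟩
    rw [pdy_pdy_comp_reflect (fun z => B (q z))]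
    exact hPDE (x, a - y) ⟨h₁, h₂, by dsimp only; linarith, by dsimp only; linarith⟩
  obtain ⟨ε, hε, hεψ, hle⟩ := hW.sonic_curve_le_start (h₀ := fun ψ => h₀ (a - ψ))
    (q := fun z => q (z.1, a - z.2)) (V := (fun z : ℝ × ℝ => (z.1, a - z.2)) ⁻¹' V) hψ hμ
    (hh₀.comp (differentiable_const a |>.sub differentiable_id)) (hV.preimage (by fun_prop))
    (by simpa [ha₁] using hPV) (hq.comp (by fun_prop : ContDiff ℝ 2 _).contDiffOn fun _ h => h)
    hPDE' (fun ψ hψ => hson _ (hrefl ψ hψ)) (fun ψ hψ => hsubl _ (hrefl ψ hψ))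
    (by simp [pdy_comp_reflect, ha₁, hexc])
  refine ⟨ε, hε, hεψ, fun ψ hψ => ?_⟩
  simpa [ha₁] using hle (a - ψ) ⟨by linarith [hψ.2], by linarith [hψ.1]⟩

end IsSonicWindow

section GasDynamics

variable {γ : ℝ}

lemma cstar_pos (hγ : 1 < γ) : 0 < cstar γ := Real.sqrt_pos.2 (by positivity)

lemma cstar_sq (hγ : 1 < γ) : cstar γ ^ 2 = 2 / (γ + 1) := Real.sq_sqrt (by positivity)

lemma cstar_mem_Ioo (hγ : 1 < γ) : cstar γ ∈ Ioo 0 (qmaxF γ) :=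
  ⟨cstar_pos hγ, Real.sqrt_lt_sqrt (by positivity) (by gcongr; linarith)⟩

lemma one_sub_mul_cstar_sq_eq_zero (hγ : 1 < γ) : 1 - (γ + 1) / 2 * cstar γ ^ 2 = 0 := by
  rw [cstar_sq hγ]
  field_simp
  ring

lemma rhoF_base_pos (hγ : 1 < γ) {s : ℝ} (hs : s ∈ Ioo 0 (qmaxF γ)) :
    0 < 1 - (γ - 1) / 2 * s ^ 2 := by
  have h := (Real.lt_sqrt hs.1.le).1 hs.2
  rw [lt_div_iff₀ (by linarith)] at h
  linarith

lemma rhoF_pos {t : ℝ} (ht : 0 < 1 - (γ - 1) / 2 * t) : 0 < rhoF γ t := Real.rpow_pos_of_pos ht _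

lemma hasDerivAt_rhoF (hγ : 1 < γ) {t : ℝ} (ht : 0 < 1 - (γ - 1) / 2 * t) :
    HasDerivAt (rhoF γ) (-(1 / 2) * (1 - (γ - 1) / 2 * t) ^ (1 / (γ - 1) - 1)) t := by
  have h : HasDerivAt (rhoF γ)
      (-((γ - 1) / 2 * 1) * (1 / (γ - 1)) * (1 - (γ - 1) / 2 * t) ^ (1 / (γ - 1) - 1)) t :=
    (((hasDerivAt_id t).const_mul ((γ - 1) / 2)).const_sub 1).rpow_const (Or.inl ht.ne')
  convert h using 2
  field_simp [(by linarith : γ - 1 ≠ 0)]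

def Aintegrand (γ s : ℝ) : ℝ :=
  (rhoF γ (s ^ 2) + 2 * s ^ 2 * deriv (rhoF γ) (s ^ 2)) / (s * rhoF γ (s ^ 2) ^ 2)

def Bintegrand (γ s : ℝ) : ℝ := rhoF γ (s ^ 2) / s

def sonicWeight (γ s : ℝ) : ℝ :=
  (1 - (γ - 1) / 2 * s ^ 2) ^ (1 / (γ - 1) - 1) / (s * rhoF γ (s ^ 2) ^ 2)

lemma Aintegrand_eq (hγ : 1 < γ) {s : ℝ} (hs : s ∈ Ioo 0 (qmaxF γ)) :
    Aintegrand γ s = (1 - (γ + 1) / 2 * s ^ 2) * sonicWeight γ s := by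
  have hu := rhoF_base_pos hγ hs
  have hρ : rhoF γ (s ^ 2) = (1 - (γ - 1) / 2 * s ^ 2) ^ (1 / (γ - 1) - 1) *
      (1 - (γ - 1) / 2 * s ^ 2) := by
    rw [← Real.rpow_add_one hu.ne', sub_add_cancel]; rfl
  rw [Aintegrand, sonicWeight, (hasDerivAt_rhoF hγ hu).deriv]
  nth_rewrite 1 [hρ]
  ring

lemma sonicWeight_pos (hγ : 1 < γ) {s : ℝ} (hs : s ∈ Ioo 0 (qmaxF γ)) : 0 < sonicWeight γ s := by
  have hu := rhoF_base_pos hγ hs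
  have := rhoF_pos hu
  have := hs.1
  unfold sonicWeight
  positivity

lemma contDiffAt_sonicWeight (hγ : 1 < γ) {s : ℝ} (hs : s ∈ Ioo 0 (qmaxF γ)) :
    ContDiffAt ℝ 1 (sonicWeight γ) s := by
  have hu := rhoF_base_pos hγ hs
  have hden : s * rhoF γ (s ^ 2) ^ 2 ≠ 0 := by
    have := rhoF_pos hu; have := hs.1; positivity
  unfold sonicWeight
  unfold rhoF at hden ⊢
  fun_prop (disch := first | exact hu.ne' | exact hden)

lemma contDiffOn_Aintegrand (hγ : 1 < γ) : ContDiffOn ℝ 1 (Aintegrand γ) (Ioo 0 (qmaxF γ)) := by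
  refine ContDiffOn.congr (fun s hs => ContDiffAt.contDiffWithinAt ?_) fun s hs =>
    Aintegrand_eq hγ hs
  have := contDiffAt_sonicWeight hγ hs
  fun_prop

lemma contDiffOn_Bintegrand (hγ : 1 < γ) : ContDiffOn ℝ 1 (Bintegrand γ) (Ioo 0 (qmaxF γ)) := by
  intro s hs
  have hu := rhoF_base_pos hγ hs
  have hs0 := hs.1.ne'
  unfold Bintegrand rhoF
  exact ContDiffAt.contDiffWithinAt (by fun_prop (disch := first | exact hu.ne' | exact hs0))

lemma contDiffOn_Afun (hγ : 1 < γ) : ContDiffOn ℝ 2 (Afun γ) (Ioo 0 (qmaxF γ)) :=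
  contDiffOn_integral (n := 1) isOpen_Ioo ordConnected_Ioo (cstar_mem_Ioo hγ)
    (contDiffOn_Aintegrand hγ)

lemma contDiffOn_Bfun (hγ : 1 < γ) : ContDiffOn ℝ 2 (Bfun γ) (Ioo 0 (qmaxF γ)) :=
  contDiffOn_integral (n := 1) isOpen_Ioo ordConnected_Ioo (cstar_mem_Ioo hγ)
    (contDiffOn_Bintegrand hγ)

lemma deriv_Afun_eventuallyEq (hγ : 1 < γ) :
    deriv (Afun γ) =ᶠ[𝓝 (cstar γ)] fun s => (1 - (γ + 1) / 2 * s ^ 2) * sonicWeight γ s := by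
  filter_upwards [isOpen_Ioo.mem_nhds (cstar_mem_Ioo hγ)] with s hs
  rw [← Aintegrand_eq hγ hs]
  exact (hasDerivAt_integral_of_continuousOn isOpen_Ioo ordConnected_Ioo (cstar_mem_Ioo hγ)
    (contDiffOn_Aintegrand hγ).continuousOn hs).deriv

lemma deriv_Afun_cstar (hγ : 1 < γ) : deriv (Afun γ) (cstar γ) = 0 := by
  rw [(deriv_Afun_eventuallyEq hγ).eq_of_nhds, one_sub_mul_cstar_sq_eq_zero hγ, zero_mul]

lemma deriv_deriv_Afun_cstar_neg (hγ : 1 < γ) : deriv (deriv (Afun γ)) (cstar γ) < 0 := by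
  set c := cstar γ
  have hc := cstar_mem_Ioo hγ
  have hN : HasDerivAt (fun s : ℝ => 1 - (γ + 1) / 2 * s ^ 2) (-((γ + 1) / 2 * (2 * c))) c := by
    simpa using ((hasDerivAt_pow 2 c).const_mul ((γ + 1) / 2)).const_sub 1
  have hW := (contDiffAt_sonicWeight hγ hc).differentiableAt_one.hasDerivAt
  rw [(deriv_Afun_eventuallyEq hγ).deriv_eq, (hN.fun_mul hW).deriv,
    one_sub_mul_cstar_sq_eq_zero hγ, zero_mul, add_zero, neg_mul, neg_lt_zero]
  have := sonicWeight_pos hγ hc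
  have := hc.1
  have : 0 < γ + 1 := by linarith
  positivity

lemma deriv_Bfun_cstar_pos (hγ : 1 < γ) : 0 < deriv (Bfun γ) (cstar γ) := by
  have hc := cstar_mem_Ioo hγ
  show 0 < deriv (fun x => ∫ t in cstar γ..x, Bintegrand γ t) (cstar γ)
  rw [(hasDerivAt_integral_of_continuousOn isOpen_Ioo ordConnected_Ioo hc
    (contDiffOn_Bintegrand hγ).continuousOn hc).deriv]
  exact div_pos (rhoF_pos (rhoF_base_pos hγ hc)) hc.1

lemma Bfun_cstar : Bfun γ (cstar γ) = 0 := intervalIntegral.integral_same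

lemma exists_isSonicWindow_Afun_Bfun (hγ : 1 < γ) :
    ∃ K U, IsSonicWindow (Afun γ) (Bfun γ) (cstar γ) K U :=
  exists_isSonicWindow isOpen_Ioo (cstar_mem_Ioo hγ) (contDiffOn_Afun hγ) (contDiffOn_Bfun hγ)
    (deriv_Afun_cstar hγ) (deriv_deriv_Afun_cstar_neg hγ) Bfun_cstar (deriv_Bfun_cstar_pos hγ)

end GasDynamics

/-- local behavior of the sonic curve `φ = h₀(ψ)` near an
exceptional endpoint (Lemma `lemma-aaa2`). -/
theorem stmt_12 (γ : ℝ) (hγ : 1 < γ)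
    (ψ1 ψ2 μ : ℝ) (hψ : ψ1 < ψ2) (hμ : 0 < μ)
    (h0 : ℝ → ℝ) (hh0 : ContDiff ℝ 2 h0)
    (V : Set (ℝ × ℝ)) (hV : IsOpen V)
    (hKV : {p : ℝ × ℝ | h0 p.2 - μ ≤ p.1 ∧ p.1 ≤ h0 p.2 + μ ∧ ψ1 ≤ p.2 ∧ p.2 ≤ ψ2} ⊆ V)
    (q : ℝ × ℝ → ℝ) (hq : ContDiffOn ℝ 2 q V)
    (hPDE : ∀ p ∈ {p : ℝ × ℝ | h0 p.2 - μ ≤ p.1 ∧ p.1 ≤ h0 p.2 + μ ∧ ψ1 ≤ p.2 ∧ p.2 ≤ ψ2},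
      chap γ q p)
    (hson : ∀ ψ ∈ Icc ψ1 ψ2, q (h0 ψ, ψ) = cstar γ)
    (hsubl : ∀ ψ ∈ Icc ψ1 ψ2, ∀ φ, h0 ψ - μ ≤ φ → φ < h0 ψ → q (φ, ψ) < cstar γ) :
    ((pdy q (h0 ψ1, ψ1) = 0 ∧ deriv h0 ψ1 = 0 →
        ∃ ε > 0, ε ≤ ψ2 - ψ1 ∧ ∀ ψ ∈ Icc ψ1 (ψ1 + ε), h0 ψ ≤ h0 ψ1)) ∧
    ((pdy q (h0 ψ2, ψ2) = 0 ∧ deriv h0 ψ2 = 0 →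
        ∃ ε > 0, ε ≤ ψ2 - ψ1 ∧ ∀ ψ ∈ Icc (ψ2 - ε) ψ2, h0 ψ ≤ h0 ψ2)) := by
  obtain ⟨K, U, hW⟩ := exists_isSonicWindow_Afun_Bfun hγ
  have hh₀ : Differentiable ℝ h0 := hh0.differentiable (by norm_num)
  have hcurve : ∀ ψ ∈ Icc ψ1 ψ2, (h0 ψ, ψ) ∈ V := fun ψ hψ' =>
    hKV ⟨by linarith, by linarith, hψ'.1, hψ'.2⟩
  exact ⟨fun ⟨hexc, _⟩ => hW.sonic_curve_le_start hψ hμ hh₀ hV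
      (hcurve ψ1 (left_mem_Icc.2 hψ.le)) hq hPDE hson hsubl hexc,
    fun ⟨hexc, _⟩ => hW.sonic_curve_le_end hψ hμ hh₀ hV
      (hcurve ψ2 (right_mem_Icc.2 hψ.le)) hq hPDE hson hsubl hexc⟩
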